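/- arXiv:1909.10323 — 5 statements merged into one kernel-verified Lean document; each statement's English description precedes it below -/
import Mathlib

section
/- Let S be a nonempty finite type, let ν be a probability distribution on S, and let X and Y₀, Y₁, Y₂, … be random variables on a common probability space taking values in S such that each Yᵢ has distribution ν and P(X ≠ Yᵢ) ≤ 2^{-i} for every i ∈ ℕ. Then X has distribution ν. -/
/-!
If `P(X ≠ Yᵢ) ≤ εᵢ`, then `P(X ∈ s)` and `P(Yᵢ ∈ s) = ν(s)` differ by at most `εᵢ` for every
measurable `s`; letting `εᵢ → 0` forces `P(X ∈ s) = ν(s)`.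
-/

open MeasureTheory Filter Topology
open scoped ENNReal

theorem ENNReal.le_of_forall_le_add_of_tendsto_zero {a b : ℝ≥0∞} {ε : ℕ → ℝ≥0∞}
    (hε : Tendsto ε atTop (𝓝 0)) (h : ∀ i, a ≤ b + ε i) : a ≤ b :=
  ge_of_tendsto' (by simpa using hε.const_add b) h

namespace MeasureTheory

variable {Ω S : Type*} [MeasurableSpace Ω]

theorem measure_preimage_le_add_measure_ne (P : Measure Ω) (f g : Ω → S) (s : Set S) :
    P (f ⁻¹' s) ≤ P (g ⁻¹' s) + P {ω | f ω ≠ g ω} := by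
  calc P (f ⁻¹' s) ≤ P (g ⁻¹' s ∪ {ω | f ω ≠ g ω}) := by
        refine measure_mono fun ω hω => ?_
        by_cases h : f ω = g ω
        · left
          rwa [Set.mem_preimage, ← h]
        · exact Or.inr h
    _ ≤ P (g ⁻¹' s) + P {ω | f ω ≠ g ω} := measure_union_le _ _

variable [MeasurableSpace S]

theorem map_eq_of_forall_measure_ne_le {P : Measure Ω} {ν : Measure S} {X : Ω → S}
    {Y : ℕ → Ω → S} {ε : ℕ → ℝ≥0∞} (hX : Measurable X) (hY : ∀ i, Measurable (Y i))
    (hdist : ∀ i, P.map (Y i) = ν) (hclose : ∀ i, P {ω | X ω ≠ Y i ω} ≤ ε i)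
    (hε : Tendsto ε atTop (𝓝 0)) :
    P.map X = ν := by
  ext s hs
  have hYs (i : ℕ) : P (Y i ⁻¹' s) = ν s := by
    rw [← hdist i, Measure.map_apply (hY i) hs]
  rw [Measure.map_apply hX hs]
  apply le_antisymm <;> refine ENNReal.le_of_forall_le_add_of_tendsto_zero hε fun i => ?_
  · calc P (X ⁻¹' s) ≤ P (Y i ⁻¹' s) + P {ω | X ω ≠ Y i ω} :=
          measure_preimage_le_add_measure_ne P X (Y i) s
      _ ≤ ν s + ε i := by rw [hYs i]; gcongr; exact hclose i
  · calc ν s = P (Y i ⁻¹' s) := (hYs i).symm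
      _ ≤ P (X ⁻¹' s) + P {ω | Y i ω ≠ X ω} := measure_preimage_le_add_measure_ne P (Y i) X s
      _ ≤ P (X ⁻¹' s) + ε i := by simp_rw [ne_comm]; gcongr; exact hclose i

end MeasureTheory

theorem dist_eq_of_close_couplings_general {Ω : Type*} [MeasurableSpace Ω]
    (P : Measure Ω)
    {S : Type*} [MeasurableSpace S]
    (ν : Measure S)
    (X : Ω → S) (Y : ℕ → Ω → S)
    (hX : Measurable X) (hY : ∀ i, Measurable (Y i))
    (hdist : ∀ i, Measure.map (Y i) P = ν)
    (hclose : ∀ i : ℕ, P {ω | X ω ≠ Y i ω} ≤ 2⁻¹ ^ i) :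
    Measure.map X P = ν :=
  map_eq_of_forall_measure_ne_le hX hY hdist hclose
    (ENNReal.tendsto_pow_atTop_nhds_zero_of_lt_one (by norm_num))

/-- If `X` and a sequence `Y i` of `S`-valued random variables on a common
probability space are such that each `Y i` has distribution `ν` and
`P(X ≠ Y i) ≤ 2⁻ⁱ` for every `i`, then `X` has distribution `ν`. -/
theorem dist_eq_of_close_couplings {Ω : Type*} [MeasurableSpace Ω]
    (P : Measure Ω) [IsProbabilityMeasure P]
    {S : Type*} [Fintype S] [Nonempty S] [MeasurableSpace S]
    [MeasurableSingletonClass S]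
    (ν : Measure S) [IsProbabilityMeasure ν]
    (X : Ω → S) (Y : ℕ → Ω → S)
    (hX : Measurable X) (hY : ∀ i, Measurable (Y i))
    (hdist : ∀ i, Measure.map (Y i) P = ν)
    (hclose : ∀ i : ℕ, P {ω | X ω ≠ Y i ω} ≤ 2⁻¹ ^ i) :
    Measure.map X P = ν :=
  dist_eq_of_close_couplings_general P ν X Y hX hY hdist hclose
end

section
/- Let n ≥ 3, let Δ ≥ 1 and k > 3Δ be integers, and let (X_t)_{t≥0} be a stochastic process adapted to a filtration (F_t)_{t≥0} with values in {0, 1, …, n} satisfying: (i) |X_{t+1} − X_t| ≤ 1 almost surely; (ii) the state n is absorbing (almost surely X_{t+1} = n on {X_t = n}); and (iii) E[X_{t+1} − X_t | F_t] ≥ ((n − X_t)/n)·((k − 3Δ)/(k − Δ)) almost surely on the event {X_t < n}, for every t. Let T′ = ⌈2·((k − Δ)/(k − 3Δ))·n·ln n⌉. Then P(X_{T′} = n) ≥ 1/2. -/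
/-!
Multiplicative drift. Write `Y_t = n - X_t` for the distance to the absorbing state. The drift
hypothesis says `E[Y_t - Y_{t+1} | F_t] ≥ δ Y_t` with `δ = c / n`, `c = (k - 3Δ)/(k - Δ)`, on
`{X_t < n}`, and on `{X_t = n}` both sides vanish because `n` is absorbing. Taking expectations,
`E[Y_{t+1}] ≤ (1 - δ) E[Y_t]`, hence `E[Y_T] ≤ n (1 - δ)^T ≤ n e^{-δT} ≤ 1/n` for
`T ≥ 2 n ln n / c`. Since `Y_T ≥ 1` on `{X_T ≠ n}`, Markov's inequality gives
`P(X_T ≠ n) ≤ 1/n ≤ 1/2`.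
-/

open MeasureTheory
open scoped ENNReal

section MultiplicativeDrift

variable {Ω : Type*} {m mΩ : MeasurableSpace Ω} {μ : Measure Ω} [IsFiniteMeasure μ]

theorem integral_le_one_sub_mul_of_condExp_ge (hm : m ≤ mΩ) {Y Y' : Ω → ℝ} {δ : ℝ}
    (hY : Integrable Y μ) (hY' : Integrable Y' μ)
    (hdrift : ∀ᵐ ω ∂μ, δ * Y ω ≤ μ[Y - Y'|m] ω) :
    ∫ ω, Y' ω ∂μ ≤ (1 - δ) * ∫ ω, Y ω ∂μ := by
  have h := integral_mono_ae (hY.const_mul δ) integrable_condExp hdrift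
  rw [integral_condExp hm, integral_sub' hY hY', integral_const_mul] at h
  linarith

theorem integral_le_pow_mul_of_condExp_ge (F : Filtration ℕ mΩ) {Y : ℕ → Ω → ℝ}
    {δ : ℝ} (hδ : δ ≤ 1) (hY : ∀ t, Integrable (Y t) μ)
    (hdrift : ∀ t, ∀ᵐ ω ∂μ, δ * Y t ω ≤ μ[Y t - Y (t + 1)|F t] ω) (t : ℕ) :
    ∫ ω, Y t ω ∂μ ≤ (1 - δ) ^ t * ∫ ω, Y 0 ω ∂μ := by
  induction t with
  | zero => simp
  | succ t ih =>
    calc ∫ ω, Y (t + 1) ω ∂μ ≤ (1 - δ) * ∫ ω, Y t ω ∂μ :=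
          integral_le_one_sub_mul_of_condExp_ge (F.le t) (hY t) (hY (t + 1)) (hdrift t)
      _ ≤ (1 - δ) * ((1 - δ) ^ t * ∫ ω, Y 0 ω ∂μ) := by gcongr
      _ = (1 - δ) ^ (t + 1) * ∫ ω, Y 0 ω ∂μ := by ring

end MultiplicativeDrift

theorem one_sub_pow_le_inv_sq {δ x : ℝ} {T : ℕ} (hδ : δ ≤ 1) (hx : 0 < x)
    (hT : 2 * Real.log x ≤ δ * T) : (1 - δ) ^ T ≤ (x ^ 2)⁻¹ :=
  calc (1 - δ) ^ T ≤ Real.exp (-δ) ^ T :=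
        pow_le_pow_left₀ (by linarith) (Real.one_sub_le_exp_neg δ) T
    _ = Real.exp (-(δ * T)) := by rw [← Real.exp_nat_mul]; ring_nf
    _ ≤ Real.exp (-(2 * Real.log x)) := Real.exp_le_exp.mpr (by linarith)
    _ = (x ^ 2)⁻¹ := by
        rw [Real.exp_neg, show 2 * Real.log x = Real.log (x ^ 2) by simp [Real.log_pow],
          Real.exp_log (by positivity)]

section AbsorbedProcess

variable {Ω : Type*} {mΩ : MeasurableSpace Ω} {μ : Measure Ω} {n : ℕ}

theorem integrable_natCast_of_le [IsFiniteMeasure μ] {X : Ω → ℕ} (hX : Measurable X)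
    (hle : ∀ ω, X ω ≤ n) : Integrable (fun ω => (X ω : ℝ)) μ := by
  refine Integrable.of_bound (measurable_from_top.comp hX).aestronglyMeasurable n
    (.of_forall fun ω => ?_)
  simpa using hle ω

theorem one_sub_integral_le_measureReal_eq [IsProbabilityMeasure μ] {X : Ω → ℕ}
    (hX : Measurable X) (hle : ∀ ω, X ω ≤ n) :
    1 - ∫ ω, ((n : ℝ) - X ω) ∂μ ≤ μ.real {ω | X ω = n} := by
  have hS : MeasurableSet {ω | X ω = n} := hX (measurableSet_singleton n)
  have hgap : Integrable (fun ω => (n : ℝ) - X ω) μ :=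
    (integrable_const _).sub (integrable_natCast_of_le hX hle)
  have hpointwise (ω : Ω) : 1 - ((n : ℝ) - X ω) ≤ {ω | X ω = n}.indicator 1 ω := by
    by_cases h : X ω = n
    · simp [h]
    · have : (X ω : ℝ) + 1 ≤ n := by exact_mod_cast (hle ω).lt_of_ne h
      simp only [Set.indicator_of_notMem (show ω ∉ {ω | X ω = n} from h)]
      linarith
  calc 1 - ∫ ω, ((n : ℝ) - X ω) ∂μ = ∫ ω, (1 - ((n : ℝ) - X ω)) ∂μ := by
        rw [integral_sub (integrable_const 1) hgap]; simp
    _ ≤ ∫ ω, {ω | X ω = n}.indicator 1 ω ∂μ :=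
        integral_mono ((integrable_const 1).sub hgap) ((integrable_const 1).indicator hS)
          hpointwise
    _ = μ.real {ω | X ω = n} := integral_indicator_one hS

theorem condExp_increment_ae_eq_zero_of_absorbed (F : Filtration ℕ mΩ) {X : ℕ → Ω → ℕ}
    {t : ℕ} (hadapted : Measurable[F t] (X t)) (habs : ∀ᵐ ω ∂μ, X t ω = n → X (t + 1) ω = n) :
    ∀ᵐ ω ∂μ, X t ω = n → μ[fun ω' => (X (t + 1) ω' : ℝ) - X t ω'|F t] ω = 0 := by
  have hs : MeasurableSet[F t] {ω | X t ω = n} := hadapted (measurableSet_singleton n)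
  have hzero := condExp_ae_eq_restrict_zero (μ := μ)
    (f := fun ω' => (X (t + 1) ω' : ℝ) - X t ω') hs <| by
    filter_upwards [(ae_restrict_iff' (F.le t _ hs)).2 habs, ae_restrict_mem (F.le t _ hs)]
      with ω h hω
    simp [h, hω]
  exact (ae_restrict_iff' (F.le t _ hs)).1 hzero

theorem integral_sub_le_pow_mul_of_drift [IsProbabilityMeasure μ] (F : Filtration ℕ mΩ)
    {X : ℕ → Ω → ℕ} {δ : ℝ} (hδ : δ ≤ 1) (hadapted : ∀ t, Measurable[F t] (X t))
    (hle : ∀ t ω, X t ω ≤ n) (habs : ∀ t, ∀ᵐ ω ∂μ, X t ω = n → X (t + 1) ω = n)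
    (hdrift : ∀ t, ∀ᵐ ω ∂μ, X t ω < n →
      δ * ((n : ℝ) - X t ω) ≤ μ[fun ω' => (X (t + 1) ω' : ℝ) - X t ω'|F t] ω) (t : ℕ) :
    ∫ ω, ((n : ℝ) - X t ω) ∂μ ≤ (1 - δ) ^ t * n := by
  have hgap (t : ℕ) : Integrable (fun ω => (n : ℝ) - X t ω) μ :=
    (integrable_const _).sub
      (integrable_natCast_of_le ((hadapted t).mono (F.le t) le_rfl) (hle t))
  have hdrift' (t : ℕ) : ∀ᵐ ω ∂μ, δ * ((n : ℝ) - X t ω) ≤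
      μ[(fun ω => (n : ℝ) - X t ω) - (fun ω => (n : ℝ) - X (t + 1) ω)|F t] ω := by
    have hincr : (fun ω => (n : ℝ) - X t ω) - (fun ω => (n : ℝ) - X (t + 1) ω) =
        fun ω => (X (t + 1) ω : ℝ) - X t ω := by
      funext ω; simp only [Pi.sub_apply]; ring
    filter_upwards [hdrift t, condExp_increment_ae_eq_zero_of_absorbed F (hadapted t) (habs t)]
      with ω hlt heq
    rw [hincr]
    rcases (hle t ω).lt_or_eq with h | h
    · exact hlt h
    · simp [heq h, h]
  calc ∫ ω, ((n : ℝ) - X t ω) ∂μ ≤ (1 - δ) ^ t * ∫ ω, ((n : ℝ) - X 0 ω) ∂μ :=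
        integral_le_pow_mul_of_condExp_ge F hδ hgap hdrift' t
    _ ≤ (1 - δ) ^ t * n := by
        gcongr
        calc ∫ ω, ((n : ℝ) - X 0 ω) ∂μ ≤ ∫ _, (n : ℝ) ∂μ :=
              integral_mono (hgap 0) (integrable_const _)
                fun ω => sub_le_self _ (Nat.cast_nonneg _)
          _ = n := by simp

end AbsorbedProcess

theorem coalescence_probability_general {Ω : Type*} {mΩ : MeasurableSpace Ω}
    (μ : Measure Ω) [IsProbabilityMeasure μ]
    (n Δ k : ℕ) (hn : 3 ≤ n) (hk : 3 * Δ < k)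
    (F : Filtration ℕ mΩ)
    (X : ℕ → Ω → ℕ)
    (hadapted : ∀ t, Measurable[F t] (X t))
    (hrange : ∀ t ω, X t ω ≤ n)
    (habs : ∀ t, ∀ᵐ ω ∂μ, X t ω = n → X (t + 1) ω = n)
    (hdrift : ∀ t, ∀ᵐ ω ∂μ, X t ω < n →
      (((n : ℝ) - X t ω) / n) * (((k : ℝ) - 3 * Δ) / ((k : ℝ) - Δ))
        ≤ (μ[fun ω' => ((X (t + 1) ω' : ℝ) - (X t ω' : ℝ))|F t]) ω)
    (T' : ℕ)
    (hT' : T' = ⌈2 * (((k : ℝ) - Δ) / ((k : ℝ) - 3 * Δ)) * n * Real.log n⌉₊) :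
    (1 : ℝ≥0∞) / 2 ≤ μ {ω | X T' ω = n} := by
  set c : ℝ := ((k : ℝ) - 3 * Δ) / ((k : ℝ) - Δ)
  have hnR : (3 : ℝ) ≤ n := by exact_mod_cast hn
  have hnum : (0 : ℝ) < k - 3 * Δ := by
    rw [sub_pos]; exact_mod_cast hk
  have hden : (0 : ℝ) < k - Δ := by linarith [Nat.cast_nonneg (α := ℝ) Δ]
  have hc1 : c ≤ 1 := by
    rw [div_le_one hden]
    linarith [Nat.cast_nonneg (α := ℝ) Δ]
  have hδ : c / n ≤ 1 := div_le_one_of_le₀ (by linarith) (by positivity)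
  have hT : 2 * Real.log n ≤ c / n * T' := calc
    2 * Real.log n = c / n * (2 * (((k : ℝ) - Δ) / ((k : ℝ) - 3 * Δ)) * n * Real.log n) := by
      simp only [c]; field_simp [hnum.ne', hden.ne']
    _ ≤ c / n * T' := by rw [hT']; gcongr; exact Nat.le_ceil _
  have hgap := integral_sub_le_pow_mul_of_drift F hδ hadapted hrange habs
    (fun t => (hdrift t).mono fun ω h hlt => by convert h hlt using 1; ring) T'
  have hsucc : (1 : ℝ) / 2 ≤ μ.real {ω | X T' ω = n} := calc
    (1 : ℝ) / 2 ≤ 1 - (n : ℝ)⁻¹ := by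
      have : (n : ℝ)⁻¹ ≤ 1 / 3 := by rw [inv_le_comm₀] <;> norm_num <;> linarith
      linarith
    _ ≤ 1 - (1 - c / n) ^ T' * n := by
      gcongr
      calc (1 - c / n) ^ T' * n ≤ ((n : ℝ) ^ 2)⁻¹ * n := by
            gcongr; exact one_sub_pow_le_inv_sq hδ (by linarith) hT
        _ = (n : ℝ)⁻¹ := by field_simp
    _ ≤ 1 - ∫ ω, ((n : ℝ) - X T' ω) ∂μ := by linarith
    _ ≤ μ.real {ω | X T' ω = n} :=
      one_sub_integral_le_measureReal_eq ((hadapted T').mono (F.le T') le_rfl) (hrange T')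
  rw [← ofReal_measureReal, ← ENNReal.ofReal_one, ← ENNReal.ofReal_ofNat 2,
    ← ENNReal.ofReal_div_of_pos two_pos]
  exact ENNReal.ofReal_le_ofReal hsucc

/-- Coalescence-phase analysis: a process on `{0, …, n}` with increments bounded
by `1`, absorbing state `n`, and conditional drift at least
`((n − X_t)/n)·((k − 3Δ)/(k − Δ))` (where `k > 3Δ`) is absorbed at `n` after
`T' = ⌈2·((k − Δ)/(k − 3Δ))·n·ln n⌉` steps with probability at least `1/2`. -/
theorem coalescence_probability {Ω : Type*} {mΩ : MeasurableSpace Ω}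
    (μ : Measure Ω) [IsProbabilityMeasure μ]
    (n Δ k : ℕ) (hn : 3 ≤ n) (hΔ : 1 ≤ Δ) (hk : 3 * Δ < k)
    (F : Filtration ℕ mΩ)
    (X : ℕ → Ω → ℕ)
    (hadapted : ∀ t, Measurable[F t] (X t))
    (hrange : ∀ t ω, X t ω ≤ n)
    (hstep : ∀ t, ∀ᵐ ω ∂μ, |(X (t + 1) ω : ℤ) - (X t ω : ℤ)| ≤ 1)
    (habs : ∀ t, ∀ᵐ ω ∂μ, X t ω = n → X (t + 1) ω = n)
    (hdrift : ∀ t, ∀ᵐ ω ∂μ, X t ω < n →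
      (((n : ℝ) - X t ω) / n) * (((k : ℝ) - 3 * Δ) / ((k : ℝ) - Δ))
        ≤ (μ[fun ω' => ((X (t + 1) ω' : ℝ) - (X t ω' : ℝ))|F t]) ω)
    (T' : ℕ)
    (hT' : T' = ⌈2 * (((k : ℝ) - Δ) / ((k : ℝ) - 3 * Δ)) * n * Real.log n⌉₊) :
    (1 : ℝ≥0∞) / 2 ≤ μ {ω | X T' ω = n} :=
  coalescence_probability_general μ n Δ k hn hk F X hadapted hrange habs hdrift T' hT'
end

section
/- Let k and Δ be positive integers and let Q ⊆ B ⊆ S be finite subsets of the color set [k] = {1,…,k} with |B| ≤ Δ, |S| < k − Δ, and Q ⊊ S. Sample independently: c₁ uniformly from [k] ∖ S, c₂ uniformly from S ∖ Q, and a Bernoulli event 'accept' with success probability p = 1 − (|S| − |Q|)/(k − |B|) (note 0 ≤ p ≤ 1 under the stated hypotheses). Output c₁ if 'accept' occurs or if c₂ ∈ B; otherwise output c₂. Then the output is uniformly distributed on [k] ∖ B. -/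
/-!
A color outside `S` is output only as `c₁`, on the event `accept ∨ c₂ ∈ B`, which is independent
of `c₁` and has probability `p + (1 - p) |B ∖ Q| / |S ∖ Q|`; a color of `S ∖ B` is output only as
`c₂`, when `accept` fails. With `1 - p = |S ∖ Q| / (k - |B|)` both kinds of colors get probability
`1 / (k - |B|)`, and colors of `B` are never output.
-/

open Finset
open scoped ENNReal

/-- The Bernoulli PMF with an `ℝ≥0∞`-valued parameter, as `PMF.bernoulli` was defined in older
Mathlib (it now takes an `ℝ≥0` parameter). -/
noncomputable def PMF.bernoulliENNReal (p : ℝ≥0∞) (h : p ≤ 1) : PMF Bool :=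
  PMF.ofFintype (fun b => cond b p (1 - p)) (by simp [h])

theorem ENNReal.one_sub_ofReal_one_sub_div_mul {m n : ℕ} (hmn : m ≤ n) :
    (1 - ENNReal.ofReal (1 - m / n)) * n = m := by
  have hmn' : (m : ℝ) / n ≤ 1 := div_le_one_of_le₀ (by exact_mod_cast hmn) n.cast_nonneg
  rw [← ENNReal.ofReal_one, ← ENNReal.ofReal_sub _ (sub_nonneg.2 hmn'), _root_.sub_sub_cancel,
    ← ENNReal.ofReal_natCast n, ← ENNReal.ofReal_mul (by positivity),
    div_mul_cancel_of_imp fun hn => by rw [Nat.cast_eq_zero] at hn ⊢; omega, ENNReal.ofReal_natCast]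

namespace PMF

variable {α : Type*}

theorem bernoulliENNReal_map_apply {p : ℝ≥0∞} (hp : p ≤ 1) (f : Bool → α) (x : α) :
    (bernoulliENNReal p hp).map f x = p * pure (f true) x + (1 - p) * pure (f false) x := by
  simp [map_apply, bernoulliENNReal, tsum_fintype, pure_apply, eq_comm]

theorem tsum_mul_pure_apply (μ : PMF α) (x : α) : ∑' c, μ c * pure c x = μ x :=
  congrArg (· x) μ.bind_pure

theorem tsum_mul_pure_ite_apply [DecidableEq α] (ν : PMF α) (E : α → Prop) [DecidablePred E]
    (y x : α) :
    ∑' c, ν c * pure (if E c then y else c) x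
      = ν.toOuterMeasure {c | E c} * pure y x + if E x then 0 else ν x := by
  have split : ∀ c, ν c * pure (if E c then y else c) x
      = {c | E c}.indicator ν c * pure y x + if c = x then (if E x then 0 else ν x) else 0 := by
    intro c
    by_cases hc : E c
    · by_cases hcx : c = x <;> simp_all
    · by_cases hcx : c = x <;> simp_all [pure_apply, eq_comm]
  rw [tsum_congr split, ENNReal.tsum_add, ENNReal.tsum_mul_right, toOuterMeasure_apply,
    tsum_ite_eq]

noncomputable def contractUpdate (μ ν : PMF α) (E : α → Prop) [DecidablePred E] {p : ℝ≥0∞}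
    (hp : p ≤ 1) : PMF α :=
  μ.bind fun c₁ => ν.bind fun c₂ =>
    (bernoulliENNReal p hp).map fun accept => if accept = true ∨ E c₂ then c₁ else c₂

theorem contractUpdate_apply [DecidableEq α] (μ ν : PMF α) (E : α → Prop) [DecidablePred E]
    {p : ℝ≥0∞} (hp : p ≤ 1) (x : α) :
    contractUpdate μ ν E hp x
      = μ x * (p + (1 - p) * ν.toOuterMeasure {c | E c}) + (1 - p) * if E x then 0 else ν x := by
  have inner : ∀ c₁, (ν.bind fun c₂ => (bernoulliENNReal p hp).map fun accept =>
      if accept = true ∨ E c₂ then c₁ else c₂) x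
        = pure c₁ x * (p + (1 - p) * ν.toOuterMeasure {c | E c})
          + (1 - p) * if E x then 0 else ν x := by
    intro c₁
    simp only [bind_apply, bernoulliENNReal_map_apply, true_or, if_true, Bool.false_eq_true,
      false_or, mul_add, ENNReal.tsum_add, ENNReal.tsum_mul_right, tsum_coe,
      mul_left_comm (ν _) (1 - p), ENNReal.tsum_mul_left, tsum_mul_pure_ite_apply]
    ring
  simp only [contractUpdate, bind_apply, inner, mul_add, ENNReal.tsum_add, ENNReal.tsum_mul_right,
    tsum_coe, ← mul_assoc, tsum_mul_pure_apply, one_mul]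

theorem contractUpdate_uniformOfFinset [DecidableEq α] {U T V : Finset α} (hU : U.Nonempty)
    (hT : T.Nonempty) (hV : V.Nonempty) (E : α → Prop) [DecidablePred E] (hUT : Disjoint U T)
    (hVUT : V = U ∪ {c ∈ T | ¬E c}) {p : ℝ≥0∞} (hp : p ≤ 1) (hpV : (1 - p) * #V = #T) :
    contractUpdate (uniformOfFinset U hU) (uniformOfFinset T hT) E hp = uniformOfFinset V hV := by
  have hcard : #V + #{c ∈ T | E c} = #U + #T := by
    rw [hVUT, card_union_of_disjoint (hUT.mono_right (filter_subset _ _)), add_assoc,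
      add_comm #{c ∈ T | ¬E c}, card_filter_add_card_filter_not]
  have hTV : #T ≤ #V := by
    have : ((#T : ℕ) : ℝ≥0∞) ≤ #V := hpV ▸ mul_le_of_le_one_left' tsub_le_self
    exact_mod_cast this
  have hV0 : (#V : ℝ≥0∞) ≠ 0 := by simpa using hV.card_pos.ne'
  have hT0 : (#T : ℝ≥0∞) ≠ 0 := by simpa using hT.card_pos.ne'
  have hq : 1 - p = #T * (#V : ℝ≥0∞)⁻¹ := by
    rw [← hpV, ENNReal.mul_inv_cancel_right hV0 (ENNReal.natCast_ne_top _)]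
  have hqT : (1 - p) * (#T : ℝ≥0∞)⁻¹ = (#V : ℝ≥0∞)⁻¹ := by
    rw [hq, mul_right_comm, ENNReal.mul_inv_cancel hT0 (ENNReal.natCast_ne_top _), one_mul]
  have hpU : p + (1 - p) * (#{c ∈ T | E c} / #T) = #U * (#V : ℝ≥0∞)⁻¹ := by
    have hp' : p = (#V - #T : ℕ) * (#V : ℝ≥0∞)⁻¹ := by
      rw [ENNReal.natCast_sub, ENNReal.sub_mul fun _ _ => ENNReal.inv_ne_top.2 hV0,
        ENNReal.mul_inv_cancel hV0 (ENNReal.natCast_ne_top _), ← hq,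
        ENNReal.sub_sub_cancel ENNReal.one_ne_top hp]
    rw [div_eq_mul_inv, mul_left_comm, hqT, hp', ← add_mul, ← Nat.cast_add,
      show #V - #T + #{c ∈ T | E c} = #U by omega]
  ext x
  rw [contractUpdate_apply, toOuterMeasure_uniformOfFinset_apply]
  simp only [uniformOfFinset_apply]
  have hxV : x ∈ V ↔ x ∈ U ∨ x ∈ T ∧ ¬E x := by simp [hVUT]
  by_cases hxU : x ∈ U
  · simp [hxU, hxV, disjoint_left.1 hUT hxU, hpU,
      ENNReal.inv_mul_cancel_left (Nat.cast_ne_zero.2 hU.card_pos.ne') (ENNReal.natCast_ne_top _)]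
  by_cases hE : E x
  · simp [hxU, hxV, hE]
  · by_cases hxT : x ∈ T <;> simp [hxU, hxV, hE, hxT, hqT]

end PMF

theorem contract_update_uniform_general (k Δ : ℕ)
    (S B Q : Finset (Fin k))
    (hQB : Q ⊆ B) (hBS : B ⊆ S)
    (hB : B.card ≤ Δ) (hS : S.card < k - Δ)
    (h1 : (Finset.univ \ S).Nonempty) (h2 : (S \ Q).Nonempty)
    (h3 : (Finset.univ \ B).Nonempty)
    (p : ℝ≥0∞) (hp1 : p ≤ 1)
    (hp : p = ENNReal.ofReal
      (1 - ((S.card : ℝ) - (Q.card : ℝ)) / ((k : ℝ) - (B.card : ℝ)))) :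
    ((PMF.uniformOfFinset (Finset.univ \ S) h1).bind fun c₁ =>
        (PMF.uniformOfFinset (S \ Q) h2).bind fun c₂ =>
          (PMF.bernoulliENNReal p hp1).map fun accept =>
            if accept = true ∨ c₂ ∈ B then c₁ else c₂)
      = PMF.uniformOfFinset (Finset.univ \ B) h3 := by
  have hcardT : #(S \ Q) = #S - #Q := card_sdiff_of_subset (hQB.trans hBS)
  have hcardV : #(univ \ B) = k - #B := by simp [card_sdiff_of_subset (subset_univ B)]
  have hQS : #Q ≤ #S := card_le_card (hQB.trans hBS)
  have hV : univ \ B = (univ \ S) ∪ {c ∈ S \ Q | c ∉ B} := by ext c; grind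
  refine PMF.contractUpdate_uniformOfFinset h1 h2 h3 (· ∈ B)
    (disjoint_sdiff_self_left.mono_right sdiff_subset) hV hp1 ?_
  rw [hp, hcardT, hcardV, ← Nat.cast_sub hQS, ← Nat.cast_sub (by omega : #B ≤ k)]
  exact ENNReal.one_sub_ofReal_one_sub_div_mul (by omega)

/-- Distributional correctness of the Contract update: given `Q ⊆ B ⊆ S ⊆ [k]`
with `|B| ≤ Δ`, `|S| < k − Δ` and `Q ⊊ S`, sampling `c₁` uniformly outside `S`,
`c₂` uniformly from `S ∖ Q`, an independent acceptance event of probability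
`1 − (|S| − |Q|)/(k − |B|)`, and outputting `c₁` upon acceptance or if `c₂ ∈ B`,
and `c₂` otherwise, yields a uniformly random color outside `B`. -/
theorem contract_update_uniform (k Δ : ℕ) (hΔ : 1 ≤ Δ)
    (S B Q : Finset (Fin k))
    (hQB : Q ⊆ B) (hBS : B ⊆ S)
    (hB : B.card ≤ Δ) (hS : S.card < k - Δ) (hQS : Q ⊂ S)
    (h1 : (Finset.univ \ S).Nonempty) (h2 : (S \ Q).Nonempty)
    (h3 : (Finset.univ \ B).Nonempty)
    (p : ℝ≥0∞) (hp1 : p ≤ 1)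
    (hp : p = ENNReal.ofReal
      (1 - ((S.card : ℝ) - (Q.card : ℝ)) / ((k : ℝ) - (B.card : ℝ)))) :
    ((PMF.uniformOfFinset (Finset.univ \ S) h1).bind fun c₁ =>
        (PMF.uniformOfFinset (S \ Q) h2).bind fun c₂ =>
          (PMF.bernoulliENNReal p hp1).map fun accept =>
            if accept = true ∨ c₂ ∈ B then c₁ else c₂)
      = PMF.uniformOfFinset (Finset.univ \ B) h3 :=
  contract_update_uniform_general k Δ S B Q hQB hBS hB hS h1 h2 h3 p hp1 hp
end

section
/- Let Δ < k be positive integers, let A ⊆ [k] with |A| = Δ, and let B ⊆ [k] with |B| ≤ Δ. Sample independently: a uniformly random enumeration σ = (σ(1),…,σ(Δ)) of A, a color c₁ uniform on [k] ∖ A, and a Bernoulli event 'accept' with success probability (k − Δ)/(k − |B|). Output c₁ if c₁ ∉ B and 'accept' occurs; otherwise output the first color in the sequence σ that does not lie in B (when A ∖ B = ∅ this branch occurs with probability 0, and the output there may be fixed arbitrarily). Then the output is uniformly distributed on [k] ∖ B. -/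
open Finset
open scoped ENNReal NNReal

set_option linter.deprecated false

/-!
The first color of a uniformly random enumeration of `A` lying outside `B` is uniform on `A \ B`:
the transposition of two colors of `A \ B` maps enumerations to enumerations and exchanges the
events "the first color outside `B` is `x`" and "... is `y`".

Hence the output is `c₁` with probability `p / (k - Δ) = 1 / (k - |B|)` for each `c₁ ∉ A ∪ B`,
and otherwise a uniform color of `A \ B`. The fallback is taken with probability
`|A \ B| / (k - |B|)`, because `|A \ B| + (k - Δ) = |B \ A| + (k - |B|)`, so every color outside
`B` gets probability `1 / (k - |B|)`.
-/

theorem Equiv.swap_apply_mem_iff {α : Type*} [DecidableEq α] {s : Set α} {x y : α}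
    (hxy : x ∈ s ↔ y ∈ s) (c : α) : Equiv.swap x y c ∈ s ↔ c ∈ s := by
  rw [Equiv.swap_apply_def]
  split_ifs <;> simp_all

theorem Finset.card_sdiff_add_card_univ_sdiff {α : Type*} [Fintype α] [DecidableEq α]
    (A B : Finset α) : #(A \ B) + #(univ \ A) = #(B \ A) + #(univ \ B) := by
  have hAB := card_sdiff_add_card_inter A B
  have hBA := card_sdiff_add_card_inter B A
  rw [inter_comm] at hBA
  rw [card_univ_sdiff, card_univ_sdiff]
  have := card_le_univ A
  have := card_le_univ B
  omega

namespace PMF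

variable {α β : Type*}

theorem map_uniformOfFinset_apply [DecidableEq β] {s : Finset α} (hs : s.Nonempty) (f : α → β)
    (b : β) : (uniformOfFinset s hs).map f b = #{x ∈ s | f x = b} / #s := by
  classical
  rw [← toOuterMeasure_apply_singleton, toOuterMeasure_map_apply,
    toOuterMeasure_uniformOfFinset_apply]
  congr

theorem eq_uniformOfFinset_of_apply_eq (p : PMF α) {s : Finset α} (hs : s.Nonempty)
    (hzero : ∀ x ∉ s, p x = 0) (hconst : ∀ x ∈ s, ∀ y ∈ s, p x = p y) :
    p = uniformOfFinset s hs := by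
  ext x
  by_cases hx : x ∈ s
  · have hsum : #s * p x = 1 := by
      calc #s * p x = ∑ y ∈ s, p y := by
            rw [sum_congr rfl fun y hy => hconst y hy x hx, sum_const, nsmul_eq_mul]
        _ = ∑' y, p y := (tsum_eq_sum fun y hy => hzero y hy).symm
        _ = 1 := p.tsum_coe
    rw [uniformOfFinset_apply_of_mem hs hx]
    exact ENNReal.eq_inv_of_mul_eq_one_left (by rwa [mul_comm])
  · rw [hzero x hx, uniformOfFinset_apply_of_notMem hs hx]

theorem uniformOfFinset_bind_apply {s : Finset α} (hs : s.Nonempty) (f : α → PMF β) (b : β) :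
    (uniformOfFinset s hs).bind f b = (#s : ℝ≥0∞)⁻¹ * ∑ c ∈ s, f c b := by
  rw [bind_apply, tsum_eq_sum fun c hc => by rw [uniformOfFinset_apply_of_notMem hs hc, zero_mul],
    mul_sum]
  exact sum_congr rfl fun c hc => by rw [uniformOfFinset_apply_of_mem hs hc]

theorem sum_pure_apply [DecidableEq α] (s : Finset α) (x : α) :
    ∑ c ∈ s, pure c x = if x ∈ s then 1 else 0 := by
  convert sum_ite_eq s x fun _ => (1 : ℝ≥0∞) using 2 with c
  convert pure_apply c x

theorem bind_bind_map_ite_eq (ν μ : PMF α) (π : PMF Bool) (P : α → Bool → Prop)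
    [∀ c a, Decidable (P c a)] :
    (ν.bind fun f => μ.bind fun c => π.map fun a => if P c a then c else f) =
      μ.bind fun c => π.bind fun a => if P c a then pure c else ν := by
  rw [bind_comm]
  congr 1; funext c
  simp_rw [← bind_pure_comp]
  rw [bind_comm]
  congr 1; funext a
  split_ifs with h
  · simp only [Function.comp_apply, if_pos h, bind_const]
  · simp only [Function.comp_apply, if_neg h, bind_pure]

theorem bernoulli_bind_ite_apply {q : ℝ≥0} (hq : q ≤ 1) (P : Prop) [Decidable P] (μ ν : PMF α)
    (x : α) :
    ((bernoulli q hq).bind fun a => if P ∧ a = true then μ else ν) x =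
      q * (if P then μ x else ν x) + (1 - q) * ν x := by
  rw [bind_apply, tsum_bool, bernoulli_apply, bernoulli_apply]
  by_cases hP : P <;> simp [hP, add_comm]

/-- `hν` says that `ν` is uniform on `A \ B` when `A \ B` is nonempty, and nothing otherwise. -/
theorem bind_bernoulli_fallback_eq_uniformOfFinset [Fintype α] [DecidableEq α]
    {A B : Finset α} (hA : (univ \ A).Nonempty) (hB : (univ \ B).Nonempty) {q : ℝ≥0}
    (hq : q ≤ 1) (hqAB : (q : ℝ≥0∞) = #(univ \ A) / #(univ \ B)) (ν : PMF α)
    (hν : ∀ x, #(A \ B) * ν x = if x ∈ A \ B then 1 else 0) :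
    ((uniformOfFinset (univ \ A) hA).bind fun c =>
        (bernoulli q hq).bind fun a => if c ∉ B ∧ a = true then pure c else ν) =
      uniformOfFinset (univ \ B) hB := by
  set D := #(univ \ A)
  set K := #(univ \ B)
  set t := #((univ \ A).filter (· ∈ B))
  have hD : (D : ℝ≥0∞) ≠ 0 := by simpa [D] using hA.ne_empty
  have hK : (K : ℝ≥0∞) ≠ 0 := by simpa [K] using hB.ne_empty
  have hcard : #(A \ B) + D = t + K := by
    have htBA : t = #(B \ A) := by simp only [t]; congr 1; ext; simp [and_comm]
    rw [htBA]
    exact card_sdiff_add_card_univ_sdiff A B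
  have hcoeff : (t : ℝ≥0∞) / K + (1 - q) = #(A \ B) / K := by
    refine (ENNReal.add_left_inj (ENNReal.coe_ne_top (r := q))).1 ?_
    rw [add_assoc, tsub_add_cancel_of_le (by exact_mod_cast hq), hqAB, ENNReal.div_add_div_same,
      ← ENNReal.div_self hK (ENNReal.natCast_ne_top K), ENNReal.div_add_div_same]
    exact_mod_cast congrArg (fun n : ℕ => (n : ℝ≥0∞) / K) hcard.symm
  have hDq : (D : ℝ≥0∞)⁻¹ * q = (K : ℝ≥0∞)⁻¹ := by
    rw [hqAB, div_eq_mul_inv, ← mul_assoc, ENNReal.inv_mul_cancel hD (by simp), one_mul]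
  ext x
  simp_rw [uniformOfFinset_bind_apply, bernoulli_bind_ite_apply, sum_add_distrib, ← mul_sum,
    sum_ite, sum_const, sum_pure_apply, not_not, nsmul_eq_mul]
  set I : ℝ≥0∞ := if x ∈ (univ \ A).filter (· ∉ B) then 1 else 0
  calc (D : ℝ≥0∞)⁻¹ * (q * (I + t * ν x) + (1 - q) * (D * ν x))
      = ((D : ℝ≥0∞)⁻¹ * q) * I + (((D : ℝ≥0∞)⁻¹ * q) * t + ((D : ℝ≥0∞)⁻¹ * D) * (1 - q)) * ν x := by
        ring
    _ = (K : ℝ≥0∞)⁻¹ * I + ((t : ℝ≥0∞) / K + (1 - q)) * ν x := by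
        rw [hDq, ENNReal.inv_mul_cancel hD (ENNReal.natCast_ne_top D), one_mul, div_eq_mul_inv]
        ring
    _ = (K : ℝ≥0∞)⁻¹ * (I + #(A \ B) * ν x) := by
        rw [hcoeff, div_eq_mul_inv]
        ring
    _ = uniformOfFinset (univ \ B) hB x := by
        rw [hν]
        by_cases hxA : x ∈ A <;> by_cases hxB : x ∈ B <;> simp [I, K, hxA, hxB]

end PMF

section FirstNotMem

variable {α : Type*} [DecidableEq α]

def firstNotMem (B : Finset α) (d : α) (l : List α) : α :=
  (l.find? fun c => decide (c ∉ B)).getD d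

theorem find?_notMem_isSome {B : Finset α} {l : List α} (h : ∃ c ∈ l, c ∉ B) :
    (l.find? fun c => decide (c ∉ B)).isSome := by
  simpa [List.find?_isSome] using h

theorem firstNotMem_mem_sdiff {B : Finset α} {l : List α} (d : α) (h : ∃ c ∈ l, c ∉ B) :
    firstNotMem B d l ∈ l.toFinset \ B := by
  obtain ⟨c, hc⟩ := Option.isSome_iff_exists.mp (find?_notMem_isSome h)
  rw [firstNotMem, hc, Option.getD_some, mem_sdiff, List.mem_toFinset]
  exact ⟨List.mem_of_find?_eq_some hc, by simpa using List.find?_some hc⟩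

theorem firstNotMem_map {B : Finset α} {l : List α} (d : α) {g : Equiv.Perm α}
    (hg : ∀ c, g c ∈ B ↔ c ∈ B) (h : ∃ c ∈ l, c ∉ B) :
    firstNotMem B d (l.map g) = g (firstNotMem B d l) := by
  obtain ⟨c, hc⟩ := Option.isSome_iff_exists.mp (find?_notMem_isSome h)
  have hcomp : ((fun c => decide (c ∉ B)) ∘ g) = fun c => decide (c ∉ B) := by
    funext c; simp [hg]
  rw [firstNotMem, firstNotMem, List.find?_map, hcomp, hc, Option.map_some, Option.getD_some,
    Option.getD_some]

variable {A B : Finset α} {E : Finset (List α)}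

theorem map_mem_of_apply_mem_iff (hE : ∀ l, l ∈ E ↔ l.Nodup ∧ l.toFinset = A)
    {g : Equiv.Perm α} (hg : ∀ c, g c ∈ A ↔ c ∈ A) {l : List α} (hl : l ∈ E) : l.map g ∈ E := by
  rw [hE] at hl ⊢
  refine ⟨hl.1.map g.injective, ?_⟩
  have hmem : ∀ c, c ∈ l ↔ c ∈ A := fun c => by rw [← hl.2, List.mem_toFinset]
  ext c
  rw [List.mem_toFinset, List.mem_map]
  constructor
  · rintro ⟨a, ha, rfl⟩
    exact (hg a).2 ((hmem a).1 ha)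
  · intro hc
    exact ⟨g.symm c, (hmem _).2 ((hg _).1 (by rwa [g.apply_symm_apply])), g.apply_symm_apply c⟩

theorem card_filter_firstNotMem_eq (hE : ∀ l, l ∈ E ↔ l.Nodup ∧ l.toFinset = A) (d : α)
    {x y : α} (hx : x ∈ A \ B) (hy : y ∈ A \ B) :
    #{l ∈ E | firstNotMem B d l = x} = #{l ∈ E | firstNotMem B d l = y} := by
  rw [mem_sdiff] at hx hy
  have hA := Equiv.swap_apply_mem_iff (s := (A : Set α)) (iff_of_true hx.1 hy.1)
  have hB := Equiv.swap_apply_mem_iff (s := (B : Set α)) (iff_of_false hx.2 hy.2)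
  simp only [mem_coe] at hA hB
  have hfirst : ∀ l ∈ E,
      firstNotMem B d (l.map (Equiv.swap x y)) = Equiv.swap x y (firstNotMem B d l) := by
    intro l hl
    refine firstNotMem_map d hB ⟨x, ?_, hx.2⟩
    rw [← List.mem_toFinset, ((hE l).1 hl).2]
    exact hx.1
  have hinv : ∀ l : List α, (l.map (Equiv.swap x y)).map (Equiv.swap x y) = l := by
    simp [List.map_map, Function.comp_def]
  refine card_nbij' (List.map (Equiv.swap x y)) (List.map (Equiv.swap x y)) ?_ ?_
    (fun l _ => hinv l) (fun l _ => hinv l)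
  · intro l hl
    simp only [coe_filter, Set.mem_ofPred_eq] at hl ⊢
    refine ⟨map_mem_of_apply_mem_iff hE hA hl.1, ?_⟩
    rw [hfirst l hl.1, hl.2, Equiv.swap_apply_left]
  · intro l hl
    simp only [coe_filter, Set.mem_ofPred_eq] at hl ⊢
    refine ⟨map_mem_of_apply_mem_iff hE hA hl.1, ?_⟩
    rw [hfirst l hl.1, hl.2, Equiv.swap_apply_right]

theorem map_firstNotMem_uniformOfFinset (hE : ∀ l, l ∈ E ↔ l.Nodup ∧ l.toFinset = A)
    (hEne : E.Nonempty) (d : α) (hAB : (A \ B).Nonempty) :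
    (PMF.uniformOfFinset E hEne).map (firstNotMem B d) = PMF.uniformOfFinset (A \ B) hAB := by
  have hmem : ∀ l ∈ E, firstNotMem B d l ∈ A \ B := by
    intro l hl
    obtain ⟨x, hx⟩ := hAB
    rw [← ((hE l).1 hl).2] at hx ⊢
    exact firstNotMem_mem_sdiff d ⟨x, List.mem_toFinset.1 (mem_sdiff.1 hx).1, (mem_sdiff.1 hx).2⟩
  refine PMF.eq_uniformOfFinset_of_apply_eq _ hAB (fun x hx => ?_) (fun x hx y hy => ?_)
  · rw [PMF.map_uniformOfFinset_apply, card_eq_zero.2 (filter_eq_empty_iff.2 ?_), Nat.cast_zero,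
      ENNReal.zero_div]
    rintro l hl rfl
    exact hx (hmem l hl)
  · rw [PMF.map_uniformOfFinset_apply, PMF.map_uniformOfFinset_apply,
      card_filter_firstNotMem_eq hE d hx hy]

theorem card_sdiff_mul_map_firstNotMem_apply (hE : ∀ l, l ∈ E ↔ l.Nodup ∧ l.toFinset = A)
    (hEne : E.Nonempty) (d x : α) :
    #(A \ B) * (PMF.uniformOfFinset E hEne).map (firstNotMem B d) x =
      if x ∈ A \ B then 1 else 0 := by
  rcases (A \ B).eq_empty_or_nonempty with hAB | hAB
  · simp [hAB]
  rw [map_firstNotMem_uniformOfFinset hE hEne d hAB]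
  by_cases hx : x ∈ A \ B
  · rw [PMF.uniformOfFinset_apply_of_mem hAB hx, if_pos hx,
      ENNReal.mul_inv_cancel (by simpa using hAB.ne_empty) (ENNReal.natCast_ne_top _)]
  · rw [PMF.uniformOfFinset_apply_of_notMem hAB hx, if_neg hx, mul_zero]

end FirstNotMem

/-- Distributional correctness of the Compress update: with `A ⊆ [k]`, `|A| = Δ`,
`|B| ≤ Δ`, sampling a uniformly random enumeration `σ` of `A`, a color `c₁`
uniform outside `A`, and an independent acceptance event of probability
`(k − Δ)/(k − |B|)`, then outputting `c₁` if `c₁ ∉ B` and acceptance occurs, and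
otherwise the first color of `σ` not in `B` (arbitrary, say `d`, if none exists),
yields a uniformly random color outside `B`. -/
theorem compress_update_uniform (k Δ : ℕ)
    (A B : Finset (Fin k)) (hA : A.card = Δ)
    (Perms : Finset (List (Fin k)))
    (hPerms : ∀ l : List (Fin k), l ∈ Perms ↔ l.Nodup ∧ l.toFinset = A)
    (hPne : Perms.Nonempty)
    (h1 : (Finset.univ \ A).Nonempty) (h2 : (Finset.univ \ B).Nonempty)
    (d : Fin k)
    (p : ℝ≥0∞) (hp1 : p ≤ 1)
    (hp : p = (((k : ℝ≥0∞) - (Δ : ℝ≥0∞)) / ((k : ℝ≥0∞) - (B.card : ℝ≥0∞)))) :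
    ((PMF.uniformOfFinset Perms hPne).bind fun σ =>
        (PMF.uniformOfFinset (Finset.univ \ A) h1).bind fun c₁ =>
          (PMF.bernoulli p.toNNReal (by simpa using ENNReal.toNNReal_mono ENNReal.one_ne_top hp1)).map fun accept =>
            if c₁ ∉ B ∧ accept = true then c₁
            else (σ.find? (fun c => decide (c ∉ B))).getD d)
      = PMF.uniformOfFinset (Finset.univ \ B) h2 := by
  have hq : (p.toNNReal : ℝ≥0∞) = #(univ \ A) / #(univ \ B) := by
    rw [ENNReal.coe_toNNReal (ne_top_of_le_ne_top ENNReal.one_ne_top hp1), hp, card_univ_sdiff,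
      card_univ_sdiff, Fintype.card_fin, hA, ENNReal.natCast_sub, ENNReal.natCast_sub]
  rw [← PMF.bind_bernoulli_fallback_eq_uniformOfFinset h1 h2 _ hq _
    (card_sdiff_mul_map_firstNotMem_apply hPerms hPne d), ← PMF.bind_bind_map_ite_eq, PMF.bind_map]
  rfl
end

section
/- Let G be a finite simple graph with vertex set V of size n ≥ 1 and maximum degree Δ ≥ 1, let k > 3Δ be an integer, and let L : V → (nonempty subsets of [k]) satisfy 1 ≤ |L(w)| ≤ 2 for every w ∈ V. For a vertex v define S_L(v) = ⋃_{w ∈ N(v)} L(w) and Q_L(v) = ⋃_{w ∈ N(v), |L(w)| = 1} L(w), and let W = {w ∈ V : |L(w)| = 1}. Then (1/n)·[ Σ_{v ∉ W} (1 − (|S_L(v)| − |Q_L(v)|)/(k − Δ)) − Σ_{v ∈ W} (|S_L(v)| − |Q_L(v)|)/(k − Δ) ] ≥ ((n − |W|)/n) · ((k − 3Δ)/(k − Δ)). -/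
open Finset

/-- The deterministic drift inequality for the coalescence phase: with all color
lists of size `1` or `2`, `W` the set of vertices with singleton lists,
`S_L(v)` the union of the neighbors' lists and `Q_L(v)` the union of the
singleton lists among them, and `k > 3Δ`, the expected one-step change of the
number of singleton lists is at least `((n − |W|)/n)·((k − 3Δ)/(k − Δ))`. -/
theorem coalescence_drift {V : Type*} [Fintype V] [DecidableEq V]
    (G : SimpleGraph V) [DecidableRel G.Adj]
    (n Δ k : ℕ) (hn : n = Fintype.card V) (hn1 : 1 ≤ n)
    (hΔ : Δ = G.maxDegree) (hΔ1 : 1 ≤ Δ) (hk : 3 * Δ < k)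
    (L : V → Finset (Fin k))
    (hL : ∀ w : V, 1 ≤ (L w).card ∧ (L w).card ≤ 2)
    (S Q : V → Finset (Fin k))
    (hS : ∀ v, S v = (G.neighborFinset v).biUnion L)
    (hQ : ∀ v, Q v = ((G.neighborFinset v).filter fun w => (L w).card = 1).biUnion L)
    (W : Finset V) (hW : W = Finset.univ.filter fun w : V => (L w).card = 1) :
    ((n : ℝ) - (W.card : ℝ)) / (n : ℝ) * (((k : ℝ) - 3 * (Δ : ℝ)) / ((k : ℝ) - (Δ : ℝ)))
      ≤ (1 / (n : ℝ)) *
        ((∑ v ∈ Finset.univ \ W,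
            (1 - (((S v).card : ℝ) - ((Q v).card : ℝ)) / ((k : ℝ) - (Δ : ℝ))))
          - ∑ v ∈ W, (((S v).card : ℝ) - ((Q v).card : ℝ)) / ((k : ℝ) - (Δ : ℝ))) := by
  have hΔk : Δ < k := by omega
  have hc : (0 : ℝ) < (k : ℝ) - (Δ : ℝ) := by
    have : (Δ : ℝ) < (k : ℝ) := by exact_mod_cast hΔk
    linarith
  have hnpos : (0 : ℝ) < (n : ℝ) := by exact_mod_cast hn1
  -- per-vertex bound
  have hSQ : ∀ v : V, (S v).card ≤ (Q v).card +
      2 * ((G.neighborFinset v).filter fun w => ¬ (L w).card = 1).card := by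
    intro v
    have hsub : S v ⊆ Q v ∪
        ((G.neighborFinset v).filter fun w => ¬ (L w).card = 1).biUnion L := by
      rw [hS v, hQ v]
      intro x hx
      simp only [Finset.mem_biUnion, Finset.mem_union, Finset.mem_filter] at *
      obtain ⟨w, hw, hxw⟩ := hx
      by_cases h1 : (L w).card = 1
      · exact Or.inl ⟨w, ⟨hw, h1⟩, hxw⟩
      · exact Or.inr ⟨w, ⟨hw, h1⟩, hxw⟩
    have h1 : (S v).card ≤ (Q v).card +
        (((G.neighborFinset v).filter fun w => ¬ (L w).card = 1).biUnion L).card :=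
      le_trans (Finset.card_le_card hsub) (Finset.card_union_le _ _)
    have h2 : (((G.neighborFinset v).filter fun w => ¬ (L w).card = 1).biUnion L).card ≤
        2 * ((G.neighborFinset v).filter fun w => ¬ (L w).card = 1).card := by
      calc (((G.neighborFinset v).filter fun w => ¬ (L w).card = 1).biUnion L).card
          ≤ ∑ w ∈ (G.neighborFinset v).filter fun w => ¬ (L w).card = 1, (L w).card :=
            Finset.card_biUnion_le
        _ ≤ ∑ _w ∈ (G.neighborFinset v).filter fun w => ¬ (L w).card = 1, 2 :=
            Finset.sum_le_sum fun w _ => (hL w).2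
        _ = 2 * ((G.neighborFinset v).filter fun w => ¬ (L w).card = 1).card := by
            rw [Finset.sum_const, smul_eq_mul, mul_comm]
    omega
  -- double counting
  have hDC : ∑ v : V, ((G.neighborFinset v).filter fun w => ¬ (L w).card = 1).card
      = ∑ w ∈ Finset.univ.filter (fun w : V => ¬ (L w).card = 1), G.degree w := by
    have step : ∀ v : V, ((G.neighborFinset v).filter fun w => ¬ (L w).card = 1).card
        = ∑ w : V, if G.Adj v w ∧ ¬ (L w).card = 1 then 1 else 0 := by
      intro v
      rw [SimpleGraph.neighborFinset_eq_filter, Finset.filter_filter, Finset.card_filter]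
    simp only [step]
    rw [Finset.sum_comm]
    rw [Finset.sum_filter]
    refine Finset.sum_congr rfl fun w _ => ?_
    by_cases hPw : ¬ (L w).card = 1
    · have e1 : ∀ v : V, (if G.Adj v w ∧ ¬ (L w).card = 1 then (1 : ℕ) else 0)
          = if G.Adj w v then 1 else 0 := by
        intro v
        by_cases hadj : G.Adj v w
        · simp [hadj, hadj.symm, hPw]
        · have h2 : ¬ G.Adj w v := fun h => hadj h.symm
          simp [hadj, h2]
      rw [Finset.sum_congr rfl fun v _ => e1 v, ← Finset.card_filter,
        ← SimpleGraph.neighborFinset_eq_filter, SimpleGraph.card_neighborFinset_eq_degree,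
        if_pos hPw]
    · simp [hPw]
  -- filter = univ \ W
  have hfilt : Finset.univ.filter (fun w : V => ¬ (L w).card = 1) = Finset.univ \ W := by
    rw [hW, Finset.sdiff_eq_filter]
    exact Finset.filter_congr fun w _ => by simp
  have hdegΔ : ∑ w ∈ Finset.univ.filter (fun w : V => ¬ (L w).card = 1), G.degree w
      ≤ Δ * (Finset.univ \ W).card := by
    rw [hfilt]
    calc ∑ w ∈ Finset.univ \ W, G.degree w ≤ ∑ _w ∈ Finset.univ \ W, Δ :=
          Finset.sum_le_sum fun w _ => hΔ ▸ G.degree_le_maxDegree w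
      _ = Δ * (Finset.univ \ W).card := by rw [Finset.sum_const, smul_eq_mul, mul_comm]
  set m : ℕ := (Finset.univ \ W).card with hm
  -- total bound on sum of S - Q
  have hT : ∑ v : V, (((S v).card : ℝ) - ((Q v).card : ℝ)) ≤ 2 * (Δ : ℝ) * (m : ℝ) := by
    have h1 : ∑ v : V, ((S v).card : ℝ) - ∑ v : V, ((Q v).card : ℝ)
        ≤ 2 * (Δ : ℝ) * (m : ℝ) := by
      have h2 : (∑ v : V, (S v).card : ℕ) ≤ ∑ v : V, (Q v).card + 2 * (Δ * m) := by
        calc ∑ v : V, (S v).card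
            ≤ ∑ v : V, ((Q v).card +
                2 * ((G.neighborFinset v).filter fun w => ¬ (L w).card = 1).card) :=
              Finset.sum_le_sum fun v _ => hSQ v
          _ = ∑ v : V, (Q v).card +
                2 * ∑ v : V, ((G.neighborFinset v).filter fun w => ¬ (L w).card = 1).card := by
              rw [Finset.sum_add_distrib, Finset.mul_sum]
          _ ≤ ∑ v : V, (Q v).card + 2 * (Δ * m) := by
              have := hDC ▸ hdegΔ
              omega
      have h3 : ((∑ v : V, (S v).card : ℕ) : ℝ) ≤ ((∑ v : V, (Q v).card + 2 * (Δ * m) : ℕ) : ℝ) :=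
        Nat.cast_le.mpr h2
      push_cast at h3
      linarith
    rw [Finset.sum_sub_distrib]
    exact h1
  -- rewrite the RHS
  have hWsub : W ⊆ Finset.univ := Finset.subset_univ W
  have hmn : (m : ℝ) = (n : ℝ) - (W.card : ℝ) := by
    have : m = n - W.card := by
      rw [hm, Finset.card_sdiff_of_subset hWsub, Finset.card_univ, hn]
    have hWn : W.card ≤ n := by
      rw [hn, ← Finset.card_univ]; exact Finset.card_le_card hWsub
    rw [this]
    push_cast [Nat.cast_sub hWn]
    ring
  have hsplit : (∑ v ∈ Finset.univ \ W,
        (1 - (((S v).card : ℝ) - ((Q v).card : ℝ)) / ((k : ℝ) - (Δ : ℝ))))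
      - ∑ v ∈ W, (((S v).card : ℝ) - ((Q v).card : ℝ)) / ((k : ℝ) - (Δ : ℝ))
      = (m : ℝ) - (∑ v : V, (((S v).card : ℝ) - ((Q v).card : ℝ))) / ((k : ℝ) - (Δ : ℝ)) := by
    rw [Finset.sum_sub_distrib, Finset.sum_const, nsmul_eq_mul, mul_one, Finset.sum_div]
    have hsp : ∑ v ∈ Finset.univ \ W, (((S v).card : ℝ) - ((Q v).card : ℝ)) / ((k : ℝ) - (Δ : ℝ))
          + ∑ v ∈ W, (((S v).card : ℝ) - ((Q v).card : ℝ)) / ((k : ℝ) - (Δ : ℝ))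
        = ∑ v : V, (((S v).card : ℝ) - ((Q v).card : ℝ)) / ((k : ℝ) - (Δ : ℝ)) :=
      Finset.sum_sdiff hWsub
    have hmr : (m : ℝ) = (((Finset.univ \ W).card : ℕ) : ℝ) := by rw [hm]
    linarith [hsp, hmr]
  rw [hsplit, ← hmn]
  -- final algebra
  set T : ℝ := ∑ v : V, (((S v).card : ℝ) - ((Q v).card : ℝ)) with hTdef
  have key : (m : ℝ) * (((k : ℝ) - 3 * Δ) / ((k : ℝ) - Δ)) ≤ (m : ℝ) - T / ((k : ℝ) - Δ) := by
    rw [← sub_nonneg]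
    have heq : (m : ℝ) - T / ((k : ℝ) - Δ) - m * (((k : ℝ) - 3 * Δ) / ((k : ℝ) - Δ))
        = (2 * (Δ : ℝ) * m - T) / ((k : ℝ) - Δ) := by
      field_simp
      ring
    rw [heq]
    exact div_nonneg (by linarith) (le_of_lt hc)
  calc (m : ℝ) / n * (((k : ℝ) - 3 * Δ) / ((k : ℝ) - Δ))
      = 1 / (n : ℝ) * ((m : ℝ) * (((k : ℝ) - 3 * Δ) / ((k : ℝ) - Δ))) := by ring
    _ ≤ 1 / (n : ℝ) * ((m : ℝ) - T / ((k : ℝ) - Δ)) := by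
        apply mul_le_mul_of_nonneg_left key
        positivity
end
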